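/- Let ℛ be a linear growing TRS over 𝓕 and let 𝒟(ℛ) be the powerset-pair automaton built from 𝒞'_{NF_{ℛ•}}(ℛ). Let s ∈ 𝒯(𝓕) be such that s[•]_p ∈ (→_ℛ*)[NF_{ℛ•}] for every redex position p of s. Then there exists a set P ⊆ Q_f such that s →_{Γ_𝒟}* [S,P] with S = s↓. -/

import Mathlib

set_option maxHeartbeats 1000000

/-! ## Terms over a signature -/

/-- Terms over a signature given by a type `F` of function symbols together with
an arity function `ar`; variables are natural numbers. -/
inductive Term (F : Type) (ar : F → ℕ) : Type
  | var : ℕ → Term F ar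
  | app : (f : F) → (Fin (ar f) → Term F ar) → Term F ar

namespace Term

variable {F : Type} {ar : F → ℕ}

/-- The (finite) set of variables of a term. -/
def vars : Term F ar → Finset ℕ
  | var n => {n}
  | app _ ts => Finset.univ.biUnion fun i => (ts i).vars

/-- A term is ground if it contains no variables. -/
def Ground (t : Term F ar) : Prop := t.vars = ∅

/-- The number of occurrences of the variable `n` in a term. -/
def count (n : ℕ) : Term F ar → ℕ
  | var m => if m = n then 1 else 0
  | app _ ts => ∑ i, (ts i).count n

/-- A term is linear if no variable occurs twice in it. -/
def Linear (t : Term F ar) : Prop := ∀ n, t.count n ≤ 1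

/-- Applying a substitution to a term. -/
def subst (σ : ℕ → Term F ar) : Term F ar → Term F ar
  | var n => σ n
  | app f ts => app f fun i => (ts i).subst σ

/-- The subterm at a position (a list of argument indices), if the position is valid. -/
def subtermAt : Term F ar → List ℕ → Option (Term F ar)
  | t, [] => some t
  | var _, _ :: _ => none
  | app f ts, i :: p => if h : i < ar f then (ts ⟨i, h⟩).subtermAt p else none

/-- Replacing the subterm at a position, if the position is valid. -/
def replaceAt : Term F ar → List ℕ → Term F ar → Option (Term F ar)
  | _, [], u => some u
  | var _, _ :: _, _ => none
  | app f ts, i :: p, u =>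
      if h : i < ar f then
        ((ts ⟨i, h⟩).replaceAt p u).map fun s => app f (Function.update ts ⟨i, h⟩ s)
      else none

/-- `s.IsSubtermOf t` : `s` is a subterm of `t`. -/
def IsSubtermOf (s t : Term F ar) : Prop := ∃ p, t.subtermAt p = some s

/-- Relabelling of function symbols along an arity-preserving map of signatures. -/
def relabel {G : Type} {arG : G → ℕ} (φ : F → G) (h : ∀ f, arG (φ f) = ar f) :
    Term F ar → Term G arG
  | var n => var n
  | app f ts => app (φ f) fun i => (ts (Fin.cast (h f) i)).relabel φ h

end Term

/-! ## Rewriting -/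

/-- One-step rewriting with a set of rewrite rules: there are a position `p` of `s`,
a rule `(l, r)` and a substitution `σ` with `s|_p = lσ` and `t = s[rσ]_p`. -/
def Rewrites {F : Type} {ar : F → ℕ} (R : Set (Term F ar × Term F ar))
    (s t : Term F ar) : Prop :=
  ∃ (p : List ℕ) (l r : Term F ar) (σ : ℕ → Term F ar),
    (l, r) ∈ R ∧ s.subtermAt p = some (l.subst σ) ∧ s.replaceAt p (r.subst σ) = some t

/-- Many-step rewriting (reflexive–transitive closure). -/
abbrev RewritesStar {F : Type} {ar : F → ℕ} (R : Set (Term F ar × Term F ar)) :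
    Term F ar → Term F ar → Prop :=
  Relation.ReflTransGen (Rewrites R)

/-- A term rewriting system: a finite set of rules whose left-hand sides are not variables. -/
structure TRS (F : Type) (ar : F → ℕ) where
  rules : Set (Term F ar × Term F ar)
  finite : rules.Finite
  lhs_not_var : ∀ lr ∈ rules, ∀ n, lr.1 ≠ Term.var n

namespace TRS

variable {F : Type} {ar : F → ℕ}

def LeftLinear (R : TRS F ar) : Prop := ∀ lr ∈ R.rules, lr.1.Linear

def RightLinear (R : TRS F ar) : Prop := ∀ lr ∈ R.rules, lr.2.Linear

/-- A TRS is linear if all left- and right-hand sides are linear terms. -/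
def IsLinear (R : TRS F ar) : Prop := R.LeftLinear ∧ R.RightLinear

/-- A TRS is growing if every variable occurring both in the left- and the right-hand
side of a rule occurs at depth 1 in the left-hand side. -/
def Growing (R : TRS F ar) : Prop :=
  ∀ lr ∈ R.rules, ∀ n ∈ lr.1.vars, n ∈ lr.2.vars →
    ∀ (f : F) (ts : Fin (ar f) → Term F ar), lr.1 = Term.app f ts →
      ∀ i, n ∈ (ts i).vars → ts i = Term.var n

/-- A redex is an instance of a left-hand side. -/
def IsRedex (R : TRS F ar) (s : Term F ar) : Prop :=
  ∃ lr ∈ R.rules, ∃ σ : ℕ → Term F ar, s = lr.1.subst σ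

/-- `p` is a redex position of `s`. -/
def RedexPos (R : TRS F ar) (s : Term F ar) (p : List ℕ) : Prop :=
  ∃ u, s.subtermAt p = some u ∧ R.IsRedex u

def Reducible (R : TRS F ar) (s : Term F ar) : Prop := ∃ p, R.RedexPos s p

/-- A term is root-stable if it cannot be rewritten to a redex. -/
def RootStable (R : TRS F ar) (s : Term F ar) : Prop :=
  ¬ ∃ t, RewritesStar R.rules s t ∧ R.IsRedex t

/-- Ground normal forms. -/
def NFset (R : TRS F ar) : Set (Term F ar) := { t | t.Ground ∧ ¬ R.Reducible t }

/-- Ground redexes. -/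
def RedexSet (R : TRS F ar) : Set (Term F ar) := { t | t.Ground ∧ R.IsRedex t }

/-- Root-stable ground terms. -/
def RSset (R : TRS F ar) : Set (Term F ar) := { t | t.Ground ∧ R.RootStable t }

/-- Relabelling a TRS along an arity-preserving map of signatures. -/
def relabel {G : Type} {arG : G → ℕ} (R : TRS F ar) (φ : F → G)
    (h : ∀ f, arG (φ f) = ar f) : TRS G arG where
  rules := (fun lr => (lr.1.relabel φ h, lr.2.relabel φ h)) '' R.rules
  finite := R.finite.image _
  lhs_not_var := by
    rintro lr ⟨lr0, h0, rfl⟩ n hn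
    dsimp only at hn
    cases h1 : lr0.1 with
    | var m => exact absurd h1 (R.lhs_not_var lr0 h0 m)
    | app f ts =>
        rw [h1] at hn
        simp only [Term.relabel] at hn
        exact nomatch hn

end TRS

/-! ## Tree automata -/

/-- A transition rule `f(q₁,…,qₙ) → q` of a bottom-up tree automaton. -/
abbrev TARule (F : Type) (ar : F → ℕ) (Q : Type) : Type :=
  (f : F) × ((Fin (ar f) → Q) × Q)

/-- A (finite bottom-up) tree automaton without ε-transitions. -/
structure TreeAutomaton (F : Type) (ar : F → ℕ) (Q : Type) where
  trans : Set (TARule F ar Q)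
  final : Set Q

/-- `Reaches Δ t q` : the ground term `t` rewrites to the state `q` using the
transition rules `Δ`. -/
inductive Reaches {F : Type} {ar : F → ℕ} {Q : Type} (Δ : Set (TARule F ar Q)) :
    Term F ar → Q → Prop
  | app {f : F} {ts : Fin (ar f) → Term F ar} {qs : Fin (ar f) → Q} {q : Q} :
      (∀ i, Reaches Δ (ts i) (qs i)) → (⟨f, qs, q⟩ : TARule F ar Q) ∈ Δ →
      Reaches Δ (Term.app f ts) q

/-- `ReachesT Δ θ t q` : the term `t`, whose variables are interpreted as the states
given by `θ`, rewrites to the state `q` using the transition rules `Δ`. -/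
inductive ReachesT {F : Type} {ar : F → ℕ} {Q : Type} (Δ : Set (TARule F ar Q))
    (θ : ℕ → Q) : Term F ar → Q → Prop
  | var (n : ℕ) : ReachesT Δ θ (Term.var n) (θ n)
  | app {f : F} {ts : Fin (ar f) → Term F ar} {qs : Fin (ar f) → Q} {q : Q} :
      (∀ i, ReachesT Δ θ (ts i) (qs i)) → (⟨f, qs, q⟩ : TARule F ar Q) ∈ Δ →
      ReachesT Δ θ (Term.app f ts) q

/-- The language of a tree automaton: all ground terms reaching a final state. -/
def Lang {F : Type} {ar : F → ℕ} {Q : Type} (A : TreeAutomaton F ar Q) :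
    Set (Term F ar) :=
  { t | t.Ground ∧ ∃ q ∈ A.final, Reaches A.trans t q }

/-- A set of ground terms is recognizable if it is the language of some finite
tree automaton. -/
def Recognizable {F : Type} {ar : F → ℕ} (T : Set (Term F ar)) : Prop :=
  ∃ (Q : Type) (_ : Fintype Q) (A : TreeAutomaton F ar Q), T = Lang A

/-- The set of states occurring in a set of transition rules. -/
def statesOf {F : Type} {ar : F → ℕ} {Q : Type} (Γ : Set (TARule F ar Q)) : Set Q :=
  { q | ∃ ρ ∈ Γ, ρ.2.2 = q ∨ ∃ i, ρ.2.1 i = q }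

/-! ## The automaton `ℬ(ℛ)` -/

/-- The canonical representative of the state `⟨t⟩` of `ℬ(ℛ)`: all variables are
identified with the single state `⟨x⟩`, represented by `var 0`. -/
def stPattern {F : Type} {ar : F → ℕ} : Term F ar → Term F ar
  | Term.var _ => Term.var 0
  | Term.app f ts => Term.app f ts

/-- `S_ℛ`: the set of all subterms of arguments of left-hand sides of `ℛ`. -/
def SR {F : Type} {ar : F → ℕ} (R : TRS F ar) : Set (Term F ar) :=
  { s | ∃ lr ∈ R.rules, ∃ (f : F) (ts : Fin (ar f) → Term F ar),
        lr.1 = Term.app f ts ∧ ∃ i, s.IsSubtermOf (ts i) }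

/-- The representatives of the states of `ℬ(ℛ)`: the patterns of terms of `S_ℛ`,
together with `⟨x⟩`. -/
def BStateSet {F : Type} {ar : F → ℕ} (R : TRS F ar) : Set (Term F ar) :=
  stPattern '' SR R ∪ {Term.var 0}

/-- The matching rules of `ℬ(ℛ)` (with states encoded by `enc`):
`f(⟨t₁⟩,…,⟨tₙ⟩) → ⟨t⟩` for every `t = f(t₁,…,tₙ) ∈ S_ℛ`. -/
def BMatch {F : Type} {ar : F → ℕ} {Q : Type} (R : TRS F ar) (enc : Term F ar → Q) :
    Set (TARule F ar Q) :=
  { ρ | ∃ (f : F) (ts : Fin (ar f) → Term F ar), Term.app f ts ∈ SR R ∧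
        ρ = ⟨f, fun i => enc (stPattern (ts i)), enc (Term.app f ts)⟩ }

/-- The propagation rules `f(⟨x⟩,…,⟨x⟩) → ⟨x⟩` for every function symbol `f`. -/
def BProp {F : Type} {ar : F → ℕ} {Q : Type} (enc : Term F ar → Q) :
    Set (TARule F ar Q) :=
  { ρ | ∃ f : F, ρ = ⟨f, fun _ => enc (Term.var 0), enc (Term.var 0)⟩ }

/-- The transition rules of the automaton `ℬ(ℛ)`. -/
def BTrans {F : Type} {ar : F → ℕ} {Q : Type} (R : TRS F ar) (enc : Term F ar → Q) :
    Set (TARule F ar Q) :=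
  BMatch R enc ∪ BProp enc

/-- `Σ(t)`: the set of ground instances of the term `t`. -/
def GInst {F : Type} {ar : F → ℕ} (t : Term F ar) : Set (Term F ar) :=
  { s | s.Ground ∧ ∃ σ, s = t.subst σ }

/-! ## Saturation -/

/-- The state `qᵢ` associated to the argument `lᵢ` of a left-hand side in the
saturation rule: `lᵢθ` if `lᵢ` is a variable occurring in `r` (whose variable set
is `rv`), and `⟨lᵢ⟩` otherwise. -/
def satArg {F : Type} {ar : F → ℕ} {Q : Type} (enc : Term F ar → Q) (θ : ℕ → Q)
    (rv : Finset ℕ) : Term F ar → Q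
  | Term.var n => if n ∈ rv then θ n else enc (Term.var 0)
  | Term.app f ts => enc (Term.app f ts)

/-- One step of the saturation process: add all transition rules `f(q₁,…,qₙ) → q`
obtained from a rewrite rule `f(l₁,…,lₙ) → r` and a state substitution `θ`
(with values among the states `Qc` of the automaton) such that `rθ →_Γ* q`. -/
def satStep {F : Type} {ar : F → ℕ} {Q : Type} (R : TRS F ar) (enc : Term F ar → Q)
    (Qc : Set Q) (Γ : Set (TARule F ar Q)) : Set (TARule F ar Q) :=
  Γ ∪ { ρ | ∃ (f : F) (ls : Fin (ar f) → Term F ar) (r : Term F ar) (θ : ℕ → Q) (q : Q),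
        (Term.app f ls, r) ∈ R.rules ∧ (∀ n ∈ r.vars, θ n ∈ Qc) ∧ ReachesT Γ θ r q ∧
        ρ = ⟨f, fun i => satArg enc θ r.vars (ls i), q⟩ }

/-- The saturated set of transition rules: the closure of `Γ0` under the saturation
inference rule. -/
def satGamma {F : Type} {ar : F → ℕ} {Q : Type} (R : TRS F ar) (enc : Term F ar → Q)
    (Qc : Set Q) (Γ0 : Set (TARule F ar Q)) : Set (TARule F ar Q) :=
  ⋃ n, (satStep R enc Qc)^[n] Γ0

/-! ## The automaton `𝒞_T(ℛ)` and its extension `𝒞'_T(ℛ)` -/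

/-- The data of the construction of the automaton `𝒞_T(ℛ)`: an automaton `𝒜_T`
recognizing `T` with all states accessible and state set `QA`, together with an
encoding `enc` of the states `⟨t⟩` of `ℬ(ℛ)` into the common state type `Q`, such
that every state common to `𝒜_T` and `ℬ(ℛ)` accepts the same set of terms in both
automata. -/
structure CSetup {G : Type} [Fintype G] {arG : G → ℕ} (Q : Type) [Fintype Q]
    (Rg : TRS G arG) (T : Set (Term G arG)) where
  enc : Term G arG → Q
  A : TreeAutomaton G arG Q
  QA : Set Q
  henc : Set.InjOn enc (BStateSet Rg)
  hAstates : ∀ ρ ∈ A.trans, ρ.2.2 ∈ QA ∧ ∀ i, ρ.2.1 i ∈ QA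
  hfinal : A.final ⊆ QA
  hacc : ∀ q ∈ QA, ∃ s : Term G arG, s.Ground ∧ Reaches A.trans s q
  hground : ∃ s : Term G arG, s.Ground
  hshared : ∀ q ∈ QA ∩ enc '' BStateSet Rg, ∀ s : Term G arG,
      Reaches A.trans s q ↔ Reaches (BTrans Rg enc) s q
  hT : T = Lang A

namespace CSetup

variable {G : Type} [Fintype G] {arG : G → ℕ} {Q : Type} [Fintype Q]
  {Rg : TRS G arG} {T : Set (Term G arG)}

/-- The set of states of the automaton `𝒞_T(ℛ)`. -/
def Qstates (C : CSetup Q Rg T) : Set Q := C.QA ∪ C.enc '' BStateSet Rg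

/-- The transition rules of `𝒞_T(ℛ)` before saturation: the union of `𝒜_T` and `ℬ(ℛ)`. -/
def Γ0 (C : CSetup Q Rg T) : Set (TARule G arG Q) := C.A.trans ∪ BTrans Rg C.enc

/-- The transition rules of `𝒞_T(ℛ)` after saturation. -/
def Γsat (C : CSetup Q Rg T) : Set (TARule G arG Q) :=
  satGamma Rg C.enc C.Qstates C.Γ0

end CSetup

/-- The redex rules `f(⟪l₁⟫,…,⟪lₙ⟫) → q_r` for every left-hand side `f(l₁,…,lₙ)`. -/
def RedexRules {F : Type} {ar : F → ℕ} {Q : Type} (R : TRS F ar)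
    (enc2 : Term F ar → Q) (qr : Q) : Set (TARule F ar Q) :=
  { ρ | ∃ (f : F) (ls : Fin (ar f) → Term F ar) (r : Term F ar),
        (Term.app f ls, r) ∈ R.rules ∧
        ρ = ⟨f, fun i => enc2 (stPattern (ls i)), qr⟩ }

/-- The rules `f(⟨x⟩,…,q_r,…,⟨x⟩) → q_r`. -/
def QrProp {F : Type} {ar : F → ℕ} {Q : Type} (enc : Term F ar → Q) (qr : Q) :
    Set (TARule F ar Q) :=
  { ρ | ∃ (f : F) (j : Fin (ar f)),
        ρ = ⟨f, fun i => if i = j then qr else enc (Term.var 0), qr⟩ }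

/-- The data of the construction of the automaton `𝒞'_T(ℛ)`: `𝒞_T(ℛ)` extended with
a fresh copy `⟪t⟫` (encoded by `enc2`, with `⟪x⟫ = ⟨x⟩`) of the states of `ℬ(ℛ)` and
a fresh state `q_r`. -/
structure CpSetup {G : Type} [Fintype G] {arG : G → ℕ} (Q : Type) [Fintype Q]
    (Rg : TRS G arG) (T : Set (Term G arG)) extends CSetup Q Rg T where
  enc2 : Term G arG → Q
  qr : Q
  henc2 : Set.InjOn enc2 (BStateSet Rg)
  hx : enc2 (Term.var 0) = enc (Term.var 0)
  hfresh : (enc2 '' (BStateSet Rg \ {Term.var 0}) ∪ {qr}) ∩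
              (QA ∪ enc '' BStateSet Rg) = ∅
  hqr : qr ∉ enc2 '' (BStateSet Rg \ {Term.var 0})

namespace CpSetup

variable {G : Type} [Fintype G] {arG : G → ℕ} {Q : Type} [Fintype Q]
  {Rg : TRS G arG} {T : Set (Term G arG)}

/-- The transition rules `Γ'` of the automaton `𝒞'_T(ℛ)`. -/
def Γ' (C : CpSetup Q Rg T) : Set (TARule G arG Q) :=
  C.toCSetup.Γsat ∪ BMatch Rg C.enc2 ∪ RedexRules Rg C.enc2 C.qr ∪ QrProp C.enc C.qr

end CpSetup

/-! ## The signature `𝓖 = 𝓕 ∪ {•}` -/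

/-- The arity function of the extended signature `𝓕 ∪ {•}` (with `•` the fresh
constant `none`). -/
def arB {F : Type} (ar : F → ℕ) : Option F → ℕ
  | none => 0
  | some f => ar f

/-- The term `•`. -/
def bulletTm {F : Type} {ar : F → ℕ} : Term (Option F) (arB ar) :=
  Term.app none Fin.elim0

/-- The embedding of `𝒯(𝓕)`-terms into terms over `𝓕 ∪ {•}`. -/
def liftB {F : Type} {ar : F → ℕ} : Term F ar → Term (Option F) (arB ar) :=
  Term.relabel some (fun _ => rfl)

/-- A TRS over `𝓕` viewed as a TRS over `𝓕 ∪ {•}`. -/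
def TRS.liftB {F : Type} {ar : F → ℕ} (R : TRS F ar) : TRS (Option F) (arB ar) :=
  R.relabel some (fun _ => rfl)

/-- The TRS `ℛ• = ℛ ∪ {• → •}` over the signature `𝓕 ∪ {•}`. -/
def TRS.bullet {F : Type} {ar : F → ℕ} (R : TRS F ar) : TRS (Option F) (arB ar) where
  rules := R.liftB.rules ∪ {(bulletTm, bulletTm)}
  finite := R.liftB.finite.union (Set.finite_singleton _)
  lhs_not_var := by
    rintro lr (h | h) n hn
    · exact R.liftB.lhs_not_var lr h n hn
    · rw [Set.mem_singleton_iff] at h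
      rw [h] at hn
      exact absurd hn (by simp [bulletTm])

/-! ## The automaton `𝒟(ℛ)` -/

/-- For a symbol `g` and sets of states `Ss` for the arguments, the set
`g(S₁,…,Sₙ)↓` of states reachable from `g` applied to states chosen from the `Ssᵢ`. -/
def oneStep {G : Type} {arG : G → ℕ} {Q : Type} (Γ : Set (TARule G arG Q)) (g : G)
    (Ss : Fin (arG g) → Set Q) : Set Q :=
  { q | ∃ qs : Fin (arG g) → Q, (∀ i, qs i ∈ Ss i) ∧ (⟨g, qs, q⟩ : TARule G arG Q) ∈ Γ }

/-- `t↓` for a ground term `t`: the set of states reachable from `t`. -/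
def dn {G : Type} {arG : G → ℕ} {Q : Type} (Γ : Set (TARule G arG Q))
    (t : Term G arG) : Set Q :=
  { q | Reaches Γ t q }

/-- There is a rewrite rule with left-hand side `g(l₁,…,lₙ)` such that
`⟪lᵢ⟫ ∈ Ssᵢ` for all `i`. -/
def LhsMatch {G : Type} {arG : G → ℕ} {Q : Type} (Rg : TRS G arG)
    (enc2 : Term G arG → Q) (g : G) (Ss : Fin (arG g) → Set Q) : Prop :=
  ∃ (ls : Fin (arG g) → Term G arG) (r : Term G arG),
    (Term.app g ls, r) ∈ Rg.rules ∧ ∀ i, enc2 (stPattern (ls i)) ∈ Ss i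

/-- The transition rules of the automaton `𝒟(ℛ)` over `𝓕`, built from the transition
rules `Γ'` of `𝒞'_{NF}(ℛ)` over `𝓕 ∪ {•}`. -/
def DTrans {F : Type} {ar : F → ℕ} {Q : Type} (Rb : TRS (Option F) (arB ar))
    (Γ' : Set (TARule (Option F) (arB ar) Q))
    (enc enc2 : Term (Option F) (arB ar) → Q) :
    Set (TARule F ar (Set Q × Set Q)) :=
  { ρ | ∃ (f : F) (SP : Fin (ar f) → Set Q × Set Q) (P1 P2 : Set Q),
      P1 ⊆ (⋃ i : Fin (ar f), oneStep Γ' (some f)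
              (fun (j : Fin (ar f)) => if j = i then (SP j).2 else (SP j).1)) ∧
      (∀ (i : Fin (ar f)), ∀ q ∈ (SP i).2,
        (P1 ∩ oneStep Γ' (some f) (fun (j : Fin (ar f)) => if j = i then {q} else (SP j).1)).Nonempty) ∧
      ((LhsMatch Rb enc2 (some f) (fun i => (SP i).1) ∧ P2 = {enc (Term.var 0)}) ∨
       (¬ LhsMatch Rb enc2 (some f) (fun i => (SP i).1) ∧ P2 = (∅ : Set Q))) ∧
      ρ = ⟨f, SP, (oneStep Γ' (some f) (fun i => (SP i).1), P1 ∪ P2)⟩ }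

/-- The automaton `𝒟(ℛ)`: final states are the pairs `[S,P]` with `q_r ∈ S` and
`P ⊆ Q_f`. -/
def DAutomaton {F : Type} {ar : F → ℕ} {Q : Type} (Rb : TRS (Option F) (arB ar))
    (Γ' : Set (TARule (Option F) (arB ar) Q))
    (enc enc2 : Term (Option F) (arB ar) → Q) (qr : Q) (Qf : Set Q) :
    TreeAutomaton F ar (Set Q × Set Q) where
  trans := DTrans Rb Γ' enc enc2
  final := { SP | qr ∈ SP.1 ∧ SP.2 ⊆ Qf }

/-! ## Growing approximations -/

/-- `VarRepl t t'` : `t'` is obtained from `t` by replacing occurrences of variables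
by (possibly other) variables. -/
inductive VarRepl {F : Type} {ar : F → ℕ} : Term F ar → Term F ar → Prop
  | var (n m : ℕ) : VarRepl (Term.var n) (Term.var m)
  | app (f : F) (ts ts' : Fin (ar f) → Term F ar) :
      (∀ i, VarRepl (ts i) (ts' i)) → VarRepl (Term.app f ts) (Term.app f ts')

/-- `Rg` is a growing approximation of `R`: a right-linear growing TRS obtained from
`R` by replacing, in each right-hand side, occurrences of variables by variables not
occurring in the corresponding left-hand side. -/
def IsGrowingApprox {F : Type} {ar : F → ℕ} (R Rg : TRS F ar) : Prop :=
  Rg.RightLinear ∧ Rg.Growing ∧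
  (∀ lr ∈ Rg.rules, ∃ lr' ∈ R.rules, lr.1 = lr'.1 ∧ VarRepl lr'.2 lr.2 ∧
      ∀ n ∈ lr.2.vars, n ∉ lr.1.vars) ∧
  (∀ lr ∈ R.rules, ∃ lr' ∈ Rg.rules, lr.1 = lr'.1 ∧ VarRepl lr.2 lr'.2 ∧
      ∀ n ∈ lr'.2.vars, n ∉ lr'.1.vars)

/-! ## The signature `𝓖 = 𝓕 ∪ {f° : f ∈ 𝓕}` -/

/-- The arity function of the signature `𝓕 ∪ {f° : f ∈ 𝓕}` (`inl f` is `f`,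
`inr f` is `f°`). -/
def arC {F : Type} (ar : F → ℕ) : F ⊕ F → ℕ
  | Sum.inl f => ar f
  | Sum.inr f => ar f

/-- The embedding of `𝒯(𝓕)`-terms into terms over `𝓕 ∪ {f° : f ∈ 𝓕}`. -/
def liftC {F : Type} {ar : F → ℕ} : Term F ar → Term (F ⊕ F) (arC ar) :=
  Term.relabel Sum.inl (fun _ => rfl)

/-- `t°`: mark the root symbol of `t`. -/
def circTm {F : Type} {ar : F → ℕ} : Term F ar → Term (F ⊕ F) (arC ar)
  | Term.var n => Term.var n
  | Term.app f ts => Term.app (Sum.inr f) fun i => liftC (ts i)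

/-- A TRS over `𝓕` viewed as a TRS over `𝓕 ∪ {f° : f ∈ 𝓕}`. -/
def TRS.liftC {F : Type} {ar : F → ℕ} (R : TRS F ar) : TRS (F ⊕ F) (arC ar) :=
  R.relabel Sum.inl (fun _ => rfl)

/-- The TRS `𝒮° = 𝒮 ∪ {l° → r | l → r ∈ 𝒮}` over the signature `𝓕 ∪ {f° : f ∈ 𝓕}`. -/
def TRS.circ {F : Type} {ar : F → ℕ} (S : TRS F ar) : TRS (F ⊕ F) (arC ar) where
  rules := S.liftC.rules ∪ (fun lr => (circTm lr.1, _root_.liftC lr.2)) '' S.rules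
  finite := S.liftC.finite.union (S.finite.image _)
  lhs_not_var := by
    rintro lr (h | ⟨lr0, h0, rfl⟩) n hn
    · exact S.liftC.lhs_not_var lr h n hn
    · dsimp only at hn
      cases h1 : lr0.1 with
      | var m => exact absurd h1 (S.lhs_not_var lr0 h0 m)
      | app f ts =>
          rw [h1] at hn
          simp only [circTm] at hn
          exact nomatch hn

/-- The transitions added to `ℬ(𝒮°)` to obtain `𝒜_{REDEX_{𝒮°}}`:
`f(⟨l₁⟩,…,⟨lₙ⟩) → q_f` and `f°(⟨l₁⟩,…,⟨lₙ⟩) → q_f` for each left-hand side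
`f(l₁,…,lₙ)` of a rule of `𝒮`. -/
def CircRedexRules {F : Type} {ar : F → ℕ} {Q : Type} (S : TRS F ar)
    (enc : Term (F ⊕ F) (arC ar) → Q) (qf : Q) : Set (TARule (F ⊕ F) (arC ar) Q) :=
  { ρ | ∃ (f : F) (ls : Fin (ar f) → Term F ar) (r : Term F ar),
      (Term.app f ls, r) ∈ S.rules ∧
      (ρ = ⟨Sum.inl f, fun i => enc (stPattern (liftC (ls i))), qf⟩ ∨
       ρ = ⟨Sum.inr f, fun i => enc (stPattern (liftC (ls i))), qf⟩) }

/-! ## The automaton `𝒟'(ℛ,𝒮)` -/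

/-- The data of the construction of `𝒞'_{RS_{𝒮°}}(ℛ)`: the saturated automaton
`𝒞_{RS_{𝒮°}}(ℛ)`, a fresh copy `⟪t⟫` (encoded by `enc2`, with `⟪x⟫ = ⟨x⟩`) of the
states of `ℬ(ℛ)`, and an automaton `𝒞_{REDEX_𝒮}(𝒮)` (transitions `Etrans`, final
states `Qf'`) recognizing the non-`𝒮`-root-stable ground terms of `𝒯(𝓕)`. -/
structure CrsSetup {F : Type} [Fintype F] {ar : F → ℕ} (Q : Type) [Fintype Q]
    (R S : TRS F ar) extends CSetup Q R.liftC (TRS.RSset S.circ) where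
  enc2 : Term (F ⊕ F) (arC ar) → Q
  henc2 : Set.InjOn enc2 (BStateSet R.liftC)
  hx : enc2 (Term.var 0) = enc (Term.var 0)
  hfresh2 : (enc2 '' (BStateSet R.liftC \ {Term.var 0})) ∩
              (QA ∪ enc '' BStateSet R.liftC) = ∅
  Etrans : Set (TARule (F ⊕ F) (arC ar) Q)
  Qf' : Set Q
  hQf' : Qf' ⊆ statesOf Etrans
  hEfresh : statesOf Etrans ∩
      (QA ∪ enc '' BStateSet R.liftC ∪ enc2 '' (BStateSet R.liftC \ {Term.var 0})) = ∅
  hE : ∀ t : Term (F ⊕ F) (arC ar),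
      (t.Ground ∧ ∃ q ∈ Qf', Reaches Etrans t q) ↔
      (∃ s : Term F ar, t = liftC s ∧ s.Ground ∧ ¬ S.RootStable s)

namespace CrsSetup

variable {F : Type} [Fintype F] {ar : F → ℕ} {Q : Type} [Fintype Q] {R S : TRS F ar}

/-- The transition rules `Γ'` of the automaton `𝒞'_{RS_{𝒮°}}(ℛ)`. -/
def Γ' (C : CrsSetup Q R S) : Set (TARule (F ⊕ F) (arC ar) Q) :=
  C.toCSetup.Γsat ∪ BMatch R.liftC C.enc2 ∪ C.Etrans

end CrsSetup

/-- The transition rules of the automaton `𝒟'(ℛ,𝒮)` over `𝓕`, built from the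
transition rules `Γ'` of `𝒞'_{RS_{𝒮°}}(ℛ)`. -/
def DTransRS {F : Type} {ar : F → ℕ} {Q : Type} (Rg : TRS (F ⊕ F) (arC ar))
    (Γ' : Set (TARule (F ⊕ F) (arC ar) Q)) (enc2 : Term (F ⊕ F) (arC ar) → Q) :
    Set (TARule F ar (Set Q × Set Q)) :=
  { ρ | ∃ (f : F) (SP : Fin (ar f) → Set Q × Set Q) (P1 P2 : Set Q),
      P1 ⊆ (⋃ i : Fin (ar f), oneStep Γ' (Sum.inl f)
              (fun (j : Fin (ar f)) => if j = i then (SP j).2 else (SP j).1)) ∧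
      (∀ (i : Fin (ar f)), ∀ q ∈ (SP i).2,
        (P1 ∩ oneStep Γ' (Sum.inl f) (fun (j : Fin (ar f)) => if j = i then {q} else (SP j).1)).Nonempty) ∧
      ((LhsMatch Rg enc2 (Sum.inl f) (fun i => (SP i).1) ∧ P2.Nonempty ∧
          P2 ⊆ oneStep Γ' (Sum.inr f) (fun i => (SP i).1)) ∨
       (¬ LhsMatch Rg enc2 (Sum.inl f) (fun i => (SP i).1) ∧ P2 = (∅ : Set Q))) ∧
      ρ = ⟨f, SP, (oneStep Γ' (Sum.inl f) (fun i => (SP i).1), P1 ∪ P2)⟩ }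

/-- The automaton `𝒟'(ℛ,𝒮)`: final states are the pairs `[S,P]` with
`S ∩ Q_f' ≠ ∅` and `P ⊆ Q_f`. -/
def DAutomatonRS {F : Type} {ar : F → ℕ} {Q : Type} (Rg : TRS (F ⊕ F) (arC ar))
    (Γ' : Set (TARule (F ⊕ F) (arC ar) Q)) (enc2 : Term (F ⊕ F) (arC ar) → Q)
    (Qf' Qf : Set Q) : TreeAutomaton F ar (Set Q × Set Q) where
  trans := DTransRS Rg Γ' enc2
  final := { SP | (SP.1 ∩ Qf').Nonempty ∧ SP.2 ⊆ Qf }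

/-!
For every redex position `p` of `s`, the term `s[•]_p` rewrites to a normal form of `ℛ•`,
which `𝒜_T` accepts in a final state `q_p`. Saturation makes the automaton closed under
`ℛ`-steps read backwards, so `s[•]_p` itself reaches `q_p`, even in the sub-automaton in
which `•` reaches only `⟨x⟩`: normal forms contain no `•`, and saturation never reads `•`.

An induction on `s` then builds the run `s →_{Γ_𝒟}* [s↓, {q_p}]`. At a node `f(s₁,…,sₙ)`,
the run of `s[•]_{i·p}` splits at the root into a transition `f(q₁,…,qₙ) → q_{i·p}` whose
`i`-th state is the one assigned to `p` inside `sᵢ`; these transitions give `P¹`. If the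
node is a redex, its own position contributes the state of `s[•]_ε = •`, namely `⟨x⟩`, and
by left-linearity being a redex is exactly the matching condition `⟪lᵢ⟫ ∈ Sᵢ` of `P²`.
-/

namespace Term

variable {F : Type} {ar : F → ℕ}

lemma ground_app_iff {f : F} {ts : Fin (ar f) → Term F ar} :
    (app f ts).Ground ↔ ∀ i, (ts i).Ground := by
  simp only [Ground, vars, ← Finset.not_nonempty_iff_eq_empty, Finset.biUnion_nonempty,
    Finset.mem_univ, true_and, not_exists]

lemma not_ground_var (n : ℕ) : ¬ (var n : Term F ar).Ground := by
  simp [Ground, vars]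

lemma subst_app (f : F) (ts : Fin (ar f) → Term F ar) (σ : ℕ → Term F ar) :
    (app f ts).subst σ = app f fun i => (ts i).subst σ := rfl

lemma subst_of_ground {t : Term F ar} (h : t.Ground) (σ : ℕ → Term F ar) :
    t.subst σ = t := by
  induction t with
  | var n => exact absurd h (not_ground_var n)
  | app f ts ih => exact congrArg _ (funext fun i => ih i (ground_app_iff.1 h i))

lemma subst_subst (t : Term F ar) (σ τ : ℕ → Term F ar) :
    (t.subst σ).subst τ = t.subst fun n => (σ n).subst τ := by
  induction t with
  | var n => rfl
  | app f ts ih => exact congrArg _ (funext ih)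

lemma subst_congr {t : Term F ar} {σ τ : ℕ → Term F ar}
    (h : ∀ n ∈ t.vars, σ n = τ n) : t.subst σ = t.subst τ := by
  induction t with
  | var n => exact h n (Finset.mem_singleton_self n)
  | app f ts ih =>
      refine congrArg _ (funext fun i => ih i fun n hn => h n ?_)
      exact Finset.mem_biUnion.2 ⟨i, Finset.mem_univ i, hn⟩

lemma ground_subst {t : Term F ar} {σ : ℕ → Term F ar}
    (h : ∀ n, (σ n).Ground) : (t.subst σ).Ground := by
  induction t with
  | var n => exact h n
  | app f ts ih => exact ground_app_iff.2 ih

lemma mem_vars_iff_count_pos {t : Term F ar} {n : ℕ} :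
    n ∈ t.vars ↔ 0 < t.count n := by
  induction t with
  | var m => simp only [vars, count, Finset.mem_singleton]; split_ifs <;> omega
  | app f ts ih => simp [vars, count, ih, Finset.sum_pos_iff]

lemma Linear.arg {f : F} {ts : Fin (ar f) → Term F ar}
    (h : (app f ts).Linear) (i : Fin (ar f)) : (ts i).Linear := fun n =>
  (Finset.single_le_sum (f := fun j => (ts j).count n) (fun _ _ => Nat.zero_le _)
    (Finset.mem_univ i)).trans (h n)

lemma Linear.eq_of_mem_vars {f : F} {ts : Fin (ar f) → Term F ar}
    (h : (app f ts).Linear) {i j : Fin (ar f)} {n : ℕ}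
    (hi : n ∈ (ts i).vars) (hj : n ∈ (ts j).vars) : i = j := by
  by_contra hij
  have hpair := Finset.sum_le_sum_of_subset (f := fun k => (ts k).count n)
    (Finset.subset_univ {i, j})
  rw [Finset.sum_pair hij] at hpair
  have := h n
  rw [mem_vars_iff_count_pos] at hi hj
  simp only [count] at this
  omega

lemma Linear.exists_subst_app {f : F} {ls ws : Fin (ar f) → Term F ar}
    (hlin : (app f ls).Linear) (h : ∀ i, ∃ σ, ws i = (ls i).subst σ) :
    ∃ σ, app f ws = (app f ls).subst σ := by
  classical
  choose σs hσs using h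
  refine ⟨fun n => if h : ∃ i, n ∈ (ls i).vars then σs h.choose n else var n,
    congrArg _ (funext fun i => ?_)⟩
  rw [hσs i]
  refine subst_congr fun n hn => ?_
  have hex : ∃ j, n ∈ (ls j).vars := ⟨i, hn⟩
  rw [dif_pos hex, hlin.eq_of_mem_vars hex.choose_spec hn]

@[simp] lemma subtermAt_nil (t : Term F ar) : t.subtermAt [] = some t := by
  cases t <;> rfl

@[simp] lemma replaceAt_nil (t u : Term F ar) : t.replaceAt [] u = some u := by
  cases t <;> rfl

lemma subtermAt_append (t : Term F ar) (p p' : List ℕ) :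
    t.subtermAt (p ++ p') = (t.subtermAt p).bind fun w => w.subtermAt p' := by
  induction p generalizing t with
  | nil => simp
  | cons i p ih =>
      cases t with
      | var n => rfl
      | app f ts =>
          by_cases h : i < ar f
          · simp only [List.cons_append, subtermAt, dif_pos h, ih]
          · simp [subtermAt, h]

lemma replaceAt_cons {f : F} (ts : Fin (ar f) → Term F ar) (i : Fin (ar f)) (p : List ℕ)
    (u : Term F ar) : (app f ts).replaceAt (i.val :: p) u =
      ((ts i).replaceAt p u).map fun s => app f (Function.update ts i s) := by
  simp [replaceAt, i.isLt]

lemma ground_subtermAt {t w : Term F ar} {p : List ℕ} (hg : t.Ground)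
    (h : t.subtermAt p = some w) : w.Ground := by
  induction p generalizing t with
  | nil => rw [subtermAt_nil, Option.some.injEq] at h; exact h ▸ hg
  | cons i p ih =>
      cases t with
      | var n => exact absurd hg (not_ground_var n)
      | app f ts =>
          by_cases hi : i < ar f
          · simp only [subtermAt, dif_pos hi] at h
            exact ih (ground_app_iff.1 hg _) h
          · simp [subtermAt, hi] at h

lemma subtermAt_of_replaceAt {t t' u : Term F ar} {p : List ℕ}
    (h : t.replaceAt p u = some t') : t'.subtermAt p = some u := by
  induction p generalizing t t' with
  | nil => rw [replaceAt_nil, Option.some.injEq] at h; subst h; exact subtermAt_nil _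
  | cons i p ih =>
      cases t with
      | var n => cases h
      | app f ts =>
          by_cases hi : i < ar f
          · obtain ⟨s, hs, rfl⟩ := Option.map_eq_some_iff.1 (replaceAt_cons ts ⟨i, hi⟩ p u ▸ h)
            simpa [subtermAt, hi] using ih hs
          · simp [replaceAt, hi] at h

lemma replaceAt_replaceAt {t t' w u : Term F ar} {p : List ℕ}
    (hsub : t.subtermAt p = some w) (hrep : t.replaceAt p u = some t') :
    t'.replaceAt p w = some t := by
  induction p generalizing t t' with
  | nil =>
      rw [subtermAt_nil, Option.some.injEq] at hsub
      rw [replaceAt_nil, Option.some.injEq] at hrep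
      subst hsub hrep; exact replaceAt_nil _ _
  | cons i p ih =>
      cases t with
      | var n => cases hrep
      | app f ts =>
          by_cases hi : i < ar f
          · obtain ⟨s, hs, rfl⟩ :=
              Option.map_eq_some_iff.1 (replaceAt_cons ts ⟨i, hi⟩ p u ▸ hrep)
            simp only [subtermAt, dif_pos hi] at hsub
            simp [replaceAt, hi, ih hsub hs]
          · simp [replaceAt, hi] at hrep

lemma ground_replaceAt {t t' u : Term F ar} {p : List ℕ} (hg : t.Ground)
    (hu : u.Ground) (h : t.replaceAt p u = some t') : t'.Ground := by
  induction p generalizing t t' with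
  | nil => rw [replaceAt_nil, Option.some.injEq] at h; exact h ▸ hu
  | cons i p ih =>
      cases t with
      | var n => cases h
      | app f ts =>
          by_cases hi : i < ar f
          · obtain ⟨s, hs, rfl⟩ := Option.map_eq_some_iff.1 (replaceAt_cons ts ⟨i, hi⟩ p u ▸ h)
            rw [ground_app_iff] at hg ⊢
            intro j
            rcases eq_or_ne j ⟨i, hi⟩ with rfl | hj
            · rw [Function.update_self]; exact ih (hg _) hs
            · rw [Function.update_of_ne hj]; exact hg j
          · simp [replaceAt, hi] at h

lemma subtermAt_subst {t w : Term F ar} {p : List ℕ} (σ : ℕ → Term F ar)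
    (h : t.subtermAt p = some w) : (t.subst σ).subtermAt p = some (w.subst σ) := by
  induction p generalizing t with
  | nil => rw [subtermAt_nil, Option.some.injEq] at h; subst h; simp
  | cons i p ih =>
      cases t with
      | var n => cases h
      | app f ts =>
          by_cases hi : i < ar f
          · simp only [subtermAt, dif_pos hi] at h
            simpa [subst, subtermAt, hi] using ih h
          · simp [subtermAt, hi] at h

lemma replaceAt_subst {t t' u : Term F ar} {p : List ℕ} (σ : ℕ → Term F ar)
    (h : t.replaceAt p u = some t') :
    (t.subst σ).replaceAt p (u.subst σ) = some (t'.subst σ) := by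
  induction p generalizing t t' with
  | nil => rw [replaceAt_nil, Option.some.injEq] at h; subst h; simp
  | cons i p ih =>
      cases t with
      | var n => cases h
      | app f ts =>
          by_cases hi : i < ar f
          · obtain ⟨s, hs, rfl⟩ := Option.map_eq_some_iff.1 (replaceAt_cons ts ⟨i, hi⟩ p u ▸ h)
            rw [subst_app, replaceAt_cons _ ⟨i, hi⟩, ih hs]
            simp only [Option.map_some, subst_app]
            exact congrArg _ (congrArg _ (funext fun j =>
              (Function.apply_update (fun _ w => subst σ w) ts ⟨i, hi⟩ s j).symm))
          · simp [replaceAt, hi] at h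

end Term

lemma Rewrites.subst {F : Type} {ar : F → ℕ} {Rl : Set (Term F ar × Term F ar)}
    {u v : Term F ar} (h : Rewrites Rl u v) (τ : ℕ → Term F ar) :
    Rewrites Rl (u.subst τ) (v.subst τ) := by
  obtain ⟨p, l, r, σ, hlr, hsub, hrep⟩ := h
  refine ⟨p, l, r, fun n => (σ n).subst τ, hlr, ?_, ?_⟩
  · rw [← Term.subst_subst]; exact Term.subtermAt_subst τ hsub
  · rw [← Term.subst_subst]; exact Term.replaceAt_subst τ hrep

section Runs

variable {G : Type} {arG : G → ℕ} {Q : Type} {Γ : Set (TARule G arG Q)}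

lemma Reaches.mono {Γ' : Set (TARule G arG Q)} (h : Γ ⊆ Γ') {t : Term G arG} {q : Q}
    (hr : Reaches Γ t q) : Reaches Γ' t q := by
  induction hr with
  | app _ hρ ih => exact Reaches.app ih (h hρ)

lemma ReachesT.mono {Γ' : Set (TARule G arG Q)} (h : Γ ⊆ Γ') {θ : ℕ → Q}
    {t : Term G arG} {q : Q} (hr : ReachesT Γ θ t q) : ReachesT Γ' θ t q := by
  induction hr with
  | var n => exact ReachesT.var n
  | app _ hρ ih => exact ReachesT.app ih (h hρ)

lemma ReachesT.congr {θ θ' : ℕ → Q} {t : Term G arG} {q : Q}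
    (hr : ReachesT Γ θ t q) (h : ∀ n ∈ t.vars, θ' n = θ n) : ReachesT Γ θ' t q := by
  induction hr with
  | var n => exact h n (Finset.mem_singleton_self n) ▸ ReachesT.var n
  | app _ hρ ih =>
      exact ReachesT.app (fun i => ih i fun n hn =>
        h n (Finset.mem_biUnion.2 ⟨i, Finset.mem_univ i, hn⟩)) hρ

lemma Reaches.target_mem {t : Term G arG} {q : Q} (h : Reaches Γ t q) {S : Set Q}
    (hΓ : ∀ ρ ∈ Γ, ρ.2.2 ∈ S) : q ∈ S := by
  cases h with
  | app _ hρ => exact hΓ _ hρ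

lemma ReachesT.target_mem {θ : ℕ → Q} {t : Term G arG} {q : Q} (h : ReachesT Γ θ t q)
    {S : Set Q} (hθ : ∀ n ∈ t.vars, θ n ∈ S) (hΓ : ∀ ρ ∈ Γ, ρ.2.2 ∈ S) : q ∈ S := by
  cases h with
  | var n => exact hθ n (Finset.mem_singleton_self n)
  | app _ hρ => exact hΓ _ hρ

lemma dn_app (Γ : Set (TARule G arG Q)) (g : G) (us : Fin (arG g) → Term G arG) :
    dn Γ (Term.app g us) = oneStep Γ g fun i => dn Γ (us i) := by
  ext q
  constructor
  · rintro ⟨hus, hρ⟩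
    exact ⟨_, hus, hρ⟩
  · rintro ⟨qs, hqs, hρ⟩
    exact Reaches.app hqs hρ

lemma Reaches.exists_of_app_update {g : G} {ts : Fin (arG g) → Term G arG}
    {i : Fin (arG g)} {u : Term G arG} {q : Q}
    (h : Reaches Γ (Term.app g (Function.update ts i u)) q) :
    ∃ qs : Fin (arG g) → Q, (∀ j ≠ i, Reaches Γ (ts j) (qs j)) ∧ Reaches Γ u (qs i) ∧
      (⟨g, qs, q⟩ : TARule G arG Q) ∈ Γ := by
  cases h with
  | app hts hρ =>
      refine ⟨_, fun j hj => ?_, ?_, hρ⟩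
      · simpa [Function.update_of_ne hj] using hts j
      · simpa using hts i

lemma Reaches.exists_of_subtermAt {p : List ℕ} {v w : Term G arG} {q : Q}
    (hv : Reaches Γ v q) (hw : v.subtermAt p = some w) :
    ∃ q', Reaches Γ w q' ∧
      ∀ w', Reaches Γ w' q' → ∀ v', v.replaceAt p w' = some v' → Reaches Γ v' q := by
  induction p generalizing v q with
  | nil =>
      rw [Term.subtermAt_nil, Option.some.injEq] at hw
      subst hw
      refine ⟨q, hv, fun w' hw' v' hv' => ?_⟩
      rw [Term.replaceAt_nil, Option.some.injEq] at hv'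
      exact hv' ▸ hw'
  | cons i p ih =>
      cases hv with
      | @app f ts qs _ hts hρ =>
          by_cases hi : i < arG f
          · simp only [Term.subtermAt, dif_pos hi] at hw
            obtain ⟨q', hq', hctx⟩ := ih (hts _) hw
            refine ⟨q', hq', fun w' hw' v' hv' => ?_⟩
            obtain ⟨s, hs, rfl⟩ :=
              Option.map_eq_some_iff.1 (Term.replaceAt_cons ts ⟨i, hi⟩ p w' ▸ hv')
            refine Reaches.app (qs := qs) (fun j => ?_) hρ
            rcases eq_or_ne j ⟨i, hi⟩ with rfl | hj
            · rw [Function.update_self]; exact hctx w' hw' s hs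
            · rw [Function.update_of_ne hj]; exact hts j
          · simp [Term.subtermAt, hi] at hw

lemma Reaches.exists_reachesT_of_subst {t : Term G arG} {σ : ℕ → Term G arG} {q : Q}
    (h : Reaches Γ (t.subst σ) q) (hlin : t.Linear) :
    ∃ θ : ℕ → Q, (∀ n ∈ t.vars, Reaches Γ (σ n) (θ n)) ∧ ReachesT Γ θ t q := by
  induction t generalizing q with
  | var n =>
      refine ⟨fun _ => q, fun m hm => ?_, ReachesT.var n⟩
      rw [Finset.mem_singleton.1 hm]
      exact h
  | app f us ih =>
      classical
      cases h with
      | @app _ _ qs _ hts hρ =>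
          choose θs hσθ hθ using fun i => ih i (hts i) (hlin.arg i)
          refine ⟨fun n => if h : ∃ i, n ∈ (us i).vars then θs h.choose n else q,
            fun n hn => ?_, ReachesT.app (fun i => (hθ i).congr fun n hn => ?_) hρ⟩
          · have hex : ∃ i, n ∈ (us i).vars := by simpa [Term.vars] using hn
            simp only [dif_pos hex]
            exact hσθ _ n hex.choose_spec
          · have hex : ∃ j, n ∈ (us j).vars := ⟨i, hn⟩
            simp only [dif_pos hex, hlin.eq_of_mem_vars hex.choose_spec hn]

lemma ReachesT.exists_of_monotone {Γs : ℕ → Set (TARule G arG Q)} (hmono : Monotone Γs)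
    {θ : ℕ → Q} {t : Term G arG} {q : Q} (h : ReachesT (⋃ n, Γs n) θ t q) :
    ∃ n, ReachesT (Γs n) θ t q := by
  induction h with
  | var n => exact ⟨0, ReachesT.var n⟩
  | app _ hρ ih =>
      choose N hN using ih
      obtain ⟨n₀, hρ⟩ := Set.mem_iUnion.1 hρ
      refine ⟨Finset.univ.sup N ⊔ n₀, ReachesT.app (fun i => (hN i).mono (hmono ?_))
        (hmono le_sup_right hρ)⟩
      exact le_sup_of_le_left (Finset.le_sup (Finset.mem_univ i))

end Runs

section Saturation

variable {G : Type} {arG : G → ℕ} {Q : Type} {Rg : TRS G arG}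

lemma SR_arg {g : G} {us : Fin (arG g) → Term G arG} (h : Term.app g us ∈ SR Rg)
    (i : Fin (arG g)) : us i ∈ SR Rg := by
  obtain ⟨lr, hlr, f, ts, hl, j, p, hp⟩ := h
  refine ⟨lr, hlr, f, ts, hl, j, p ++ [i.val], ?_⟩
  rw [Term.subtermAt_append, hp]
  simp [Term.subtermAt, i.isLt]

lemma SR_of_lhs {g : G} {ls : Fin (arG g) → Term G arG} {r : Term G arG}
    (h : (Term.app g ls, r) ∈ Rg.rules) (i : Fin (arG g)) : ls i ∈ SR Rg :=
  ⟨_, h, g, ls, rfl, i, [], Term.subtermAt_nil _⟩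

variable {Γ : Set (TARule G arG Q)} {enc : Term G arG → Q}

lemma reaches_var_zero_of_ground (hB : BProp enc ⊆ Γ) {t : Term G arG} (ht : t.Ground) :
    Reaches Γ t (enc (Term.var 0)) := by
  induction t with
  | var n => exact absurd ht (Term.not_ground_var n)
  | app f ts ih =>
      exact Reaches.app (fun i => ih i (Term.ground_app_iff.1 ht i)) (hB ⟨f, rfl⟩)

lemma reaches_stPattern_of_mem_SR {encX : Term G arG → Q} (hB : BProp enc ⊆ Γ)
    (hM : BMatch Rg encX ⊆ Γ) (hX : encX (Term.var 0) = enc (Term.var 0))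
    {t : Term G arG} (ht : t ∈ SR Rg) {σ : ℕ → Term G arG} (hg : (t.subst σ).Ground) :
    Reaches Γ (t.subst σ) (encX (stPattern t)) := by
  induction t with
  | var n => exact hX ▸ reaches_var_zero_of_ground hB hg
  | app g us ih =>
      exact Reaches.app (fun i => ih i (SR_arg ht i) (Term.ground_app_iff.1 hg i))
        (hM ⟨g, us, ht, rfl⟩)

lemma reaches_satArg (hB : BTrans Rg enc ⊆ Γ) {l : Term G arG} (hl : l ∈ SR Rg)
    {σ : ℕ → Term G arG} (hg : (l.subst σ).Ground) {θ : ℕ → Q} {rv : Finset ℕ}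
    (hθ : ∀ n ∈ rv, Reaches Γ (σ n) (θ n)) :
    Reaches Γ (l.subst σ) (satArg enc θ rv l) := by
  have hBP : BProp enc ⊆ Γ := Set.subset_union_right.trans hB
  cases l with
  | var n =>
      by_cases hn : n ∈ rv
      · simpa [satArg, hn, Term.subst] using hθ n hn
      · simpa [satArg, hn, Term.subst] using reaches_var_zero_of_ground hBP hg
  | app g us =>
      exact reaches_stPattern_of_mem_SR hBP (Set.subset_union_left.trans hB) rfl hl hg

variable (Rg enc) (Qc : Set Q) (Γ0 : Set (TARule G arG Q))

lemma monotone_iterate_satStep : Monotone fun n => (satStep Rg enc Qc)^[n] Γ0 :=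
  monotone_nat_of_le_succ fun n => by
    rw [Function.iterate_succ_apply']
    exact Set.subset_union_left

lemma subset_satGamma : Γ0 ⊆ satGamma Rg enc Qc Γ0 :=
  Set.subset_iUnion (fun n => (satStep Rg enc Qc)^[n] Γ0) 0

variable {Rg enc Qc Γ0}

lemma satGamma_rule_mem {f : G} {ls : Fin (arG f) → Term G arG} {r : Term G arG}
    {θ : ℕ → Q} {q : Q} (hr : (Term.app f ls, r) ∈ Rg.rules) (hθ : ∀ n ∈ r.vars, θ n ∈ Qc)
    (hq : ReachesT (satGamma Rg enc Qc Γ0) θ r q) :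
    (⟨f, fun i => satArg enc θ r.vars (ls i), q⟩ : TARule G arG Q) ∈
      satGamma Rg enc Qc Γ0 := by
  obtain ⟨N, hN⟩ := ReachesT.exists_of_monotone (monotone_iterate_satStep Rg enc Qc Γ0) hq
  refine Set.mem_iUnion.2 ⟨N + 1, ?_⟩
  rw [Function.iterate_succ_apply']
  exact Or.inr ⟨f, ls, r, θ, q, hr, hθ, hN, rfl⟩

lemma satGamma_target_mem (h0 : ∀ ρ ∈ Γ0, ρ.2.2 ∈ Qc) :
    ∀ ρ ∈ satGamma Rg enc Qc Γ0, ρ.2.2 ∈ Qc := by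
  suffices ∀ N, ∀ ρ ∈ (satStep Rg enc Qc)^[N] Γ0, ρ.2.2 ∈ Qc from fun ρ hρ => by
    obtain ⟨N, hN⟩ := Set.mem_iUnion.1 hρ
    exact this N ρ hN
  intro N
  induction N with
  | zero => exact h0
  | succ N ih =>
      rw [Function.iterate_succ_apply']
      rintro ρ (hρ | ⟨f, ls, r, θ, q, -, hθ, hq, rfl⟩)
      · exact ih ρ hρ
      · exact hq.target_mem hθ ih

theorem reaches_of_rewrites (hΓ : Γ ⊆ satGamma Rg enc Qc Γ0) (hB : BTrans Rg enc ⊆ Γ)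
    (hsat : ∀ ρ ∈ satGamma Rg enc Qc Γ0, (∃ ls r, (Term.app ρ.1 ls, r) ∈ Rg.rules) → ρ ∈ Γ)
    (h0 : ∀ ρ ∈ Γ0, ρ.2.2 ∈ Qc) (hlin : Rg.RightLinear) {u v : Term G arG} {q : Q}
    (hu : u.Ground) (h : Rewrites Rg.rules u v) (hv : Reaches Γ v q) : Reaches Γ u q := by
  obtain ⟨p, l, r, σ, hlr, hsub, hrep⟩ := h
  obtain ⟨g, ls, rfl⟩ : ∃ g ls, l = Term.app g ls := by
    cases l with
    | var n => exact absurd rfl (Rg.lhs_not_var _ hlr n)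
    | app g ls => exact ⟨g, ls, rfl⟩
  obtain ⟨q', hq', hctx⟩ := hv.exists_of_subtermAt (Term.subtermAt_of_replaceAt hrep)
  obtain ⟨θ, hσθ, hθ⟩ := hq'.exists_reachesT_of_subst (hlin _ hlr)
  have hθQc : ∀ n ∈ r.vars, θ n ∈ Qc := fun n hn =>
    ((hσθ n hn).mono hΓ).target_mem (satGamma_target_mem h0)
  have hρ : (⟨g, fun i => satArg enc θ r.vars (ls i), q'⟩ : TARule G arG Q) ∈ Γ :=
    hsat _ (satGamma_rule_mem hlr hθQc (hθ.mono hΓ)) ⟨ls, r, hlr⟩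
  have hlg := Term.ground_app_iff.1 (Term.ground_subtermAt hu hsub)
  exact hctx _ (Reaches.app (fun i => reaches_satArg hB (SR_of_lhs hlr i) (hlg i) hσθ) hρ)
    u (Term.replaceAt_replaceAt hsub hrep)

/-- Rewriting may introduce variables that occur only in right-hand sides, so the
derivation is grounded by `τ` before the one-step closure `hstep` is applied. -/
lemma reaches_of_rewritesStar {Rl : Set (Term G arG × Term G arG)}
    (hstep : ∀ {u v : Term G arG} {q : Q}, u.Ground → Rewrites Rl u v → Reaches Γ v q →
      Reaches Γ u q)
    {τ : ℕ → Term G arG} (hτ : ∀ n, (τ n).Ground) {u t : Term G arG} {q : Q}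
    (h : RewritesStar Rl u t) (ht : Reaches Γ (t.subst τ) q) : Reaches Γ (u.subst τ) q := by
  induction h using Relation.ReflTransGen.head_induction_on with
  | refl => exact ht
  | head huv _ ih => exact hstep (Term.ground_subst hτ) (huv.subst τ) ih

end Saturation

namespace CpSetup

variable {G : Type} [Fintype G] {arG : G → ℕ} {Q : Type} [Fintype Q] {Rg : TRS G arG}
  {T : Set (Term G arG)} (C : CpSetup Q Rg T)

lemma Γ0_target_mem : ∀ ρ ∈ C.Γ0, ρ.2.2 ∈ C.Qstates := by
  rintro ρ (hA | ⟨g, us, hus, rfl⟩ | ⟨g, rfl⟩)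
  · exact Or.inl (C.hAstates ρ hA).1
  · exact Or.inr ⟨_, Or.inl ⟨_, hus, rfl⟩, rfl⟩
  · exact Or.inr ⟨_, Or.inr rfl, rfl⟩

lemma Γsat_target_mem : ∀ ρ ∈ C.Γsat, ρ.2.2 ∈ C.Qstates :=
  satGamma_target_mem C.Γ0_target_mem

lemma A_trans_subset_Γsat : C.A.trans ⊆ C.Γsat :=
  Set.subset_union_left.trans (subset_satGamma _ _ _ _)

lemma BTrans_subset_Γsat : BTrans Rg C.enc ⊆ C.Γsat :=
  Set.subset_union_right.trans (subset_satGamma _ _ _ _)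

lemma Γsat_subset_Γ' : C.Γsat ⊆ C.Γ' :=
  fun _ h => Or.inl (Or.inl (Or.inl h))

lemma BMatch_enc2_subset_Γ' : BMatch Rg C.enc2 ⊆ C.Γ' :=
  fun _ h => Or.inl (Or.inl (Or.inr h))

/-- Holds because the states `⟪t⟫` are fresh. -/
lemma mem_BMatch_of_target {ρ : TARule G arG Q} (hρ : ρ ∈ C.Γ') {g : G}
    {ls : Fin (arG g) → Term G arG} (hl : Term.app g ls ∈ SR Rg)
    (htgt : ρ.2.2 = C.enc2 (Term.app g ls)) : ρ ∈ BMatch Rg C.enc2 := by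
  have hfresh : C.enc2 (Term.app g ls) ∈ C.enc2 '' (BStateSet Rg \ {Term.var 0}) :=
    ⟨_, ⟨Or.inl ⟨_, hl, rfl⟩, fun h => nomatch h⟩, rfl⟩
  have hQ : C.enc2 (Term.app g ls) ∉ C.Qstates := fun h =>
    (Set.eq_empty_iff_forall_notMem.1 C.hfresh) _ ⟨Or.inl hfresh, h⟩
  have hqr : C.enc2 (Term.app g ls) ≠ C.qr := fun h => C.hqr (h ▸ hfresh)
  rcases hρ with ((hsat | hM) | ⟨_, _, _, _, rfl⟩) | ⟨_, _, rfl⟩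
  · exact absurd (htgt ▸ C.Γsat_target_mem ρ hsat) hQ
  · exact hM
  · exact absurd htgt.symm hqr
  · exact absurd htgt.symm hqr

lemma exists_of_reaches_enc2_app {w : Term G arG} {g : G} {ls : Fin (arG g) → Term G arG}
    (hl : Term.app g ls ∈ SR Rg) (hw : Reaches C.Γ' w (C.enc2 (Term.app g ls))) :
    ∃ ws, w = Term.app g ws ∧ ∀ i, Reaches C.Γ' (ws i) (C.enc2 (stPattern (ls i))) := by
  cases hw with
  | @app g' ws qs _ hws hρ =>
      obtain ⟨g'', us, hus, heq⟩ := C.mem_BMatch_of_target hρ hl rfl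
      obtain ⟨rfl, heq⟩ := Sigma.mk.inj_iff.1 heq
      obtain ⟨rfl, htgt⟩ := Prod.ext_iff.1 (eq_of_heq heq)
      cases C.henc2 (Or.inl ⟨_, hus, rfl⟩) (Or.inl ⟨_, hl, rfl⟩) htgt.symm
      exact ⟨ws, rfl, hws⟩

lemma exists_subst_of_reaches_enc2 {l : Term G arG} (hl : l ∈ SR Rg) (hlin : l.Linear)
    {w : Term G arG} (hw : Reaches C.Γ' w (C.enc2 (stPattern l))) : ∃ σ, w = l.subst σ := by
  induction l generalizing w with
  | var n => exact ⟨fun _ => w, rfl⟩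
  | app g ls ih =>
      obtain ⟨ws, rfl, hws⟩ := C.exists_of_reaches_enc2_app hl hw
      exact hlin.exists_subst_app fun i => ih i (SR_arg hl i) (hlin.arg i) (hws i)

lemma lhsMatch_dn_iff_isRedex (hlin : Rg.LeftLinear) {g : G} {ts : Fin (arG g) → Term G arG}
    (hg : (Term.app g ts).Ground) :
    LhsMatch Rg C.enc2 g (fun i => dn C.Γ' (ts i)) ↔ Rg.IsRedex (Term.app g ts) := by
  constructor
  · rintro ⟨ls, r, hr, hls⟩
    obtain ⟨σ, hσ⟩ := (hlin _ hr).exists_subst_app fun i =>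
      C.exists_subst_of_reaches_enc2 (SR_of_lhs hr i) ((hlin _ hr).arg i) (hls i)
    exact ⟨_, hr, σ, hσ⟩
  · rintro ⟨⟨l, r⟩, hr, σ, hσ⟩
    cases l with
    | var n => exact absurd rfl (Rg.lhs_not_var _ hr n)
    | app g' ls =>
        rw [Term.subst_app] at hσ
        cases hσ
        have hB : BProp C.enc ⊆ C.Γ' :=
          Set.subset_union_right.trans (C.BTrans_subset_Γsat.trans C.Γsat_subset_Γ')
        exact ⟨ls, r, hr, fun i => reaches_stPattern_of_mem_SR hB C.BMatch_enc2_subset_Γ' C.hx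
          (SR_of_lhs hr i) (Term.ground_app_iff.1 hg i)⟩

end CpSetup

section RedexPositions

variable {F : Type} {ar : F → ℕ} (S : TRS F ar)

lemma redexPos_nil {s : Term F ar} : S.RedexPos s [] ↔ S.IsRedex s := by
  simp [TRS.RedexPos]

lemma redexPos_cons {f : F} {ts : Fin (ar f) → Term F ar} (i : Fin (ar f)) (p : List ℕ) :
    S.RedexPos (Term.app f ts) (i.val :: p) ↔ S.RedexPos (ts i) p := by
  simp [TRS.RedexPos, Term.subtermAt, i.isLt]

lemma image_setOf_redexPos_app {α : Type*} (qf : List ℕ → α) (f : F)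
    (ts : Fin (ar f) → Term F ar) :
    qf '' {p | S.RedexPos (Term.app f ts) p} =
      (⋃ i : Fin (ar f), (fun p => qf (i.val :: p)) '' {p | S.RedexPos (ts i) p}) ∪
        {q | S.IsRedex (Term.app f ts) ∧ q = qf []} := by
  ext q
  constructor
  · rintro ⟨_ | ⟨j, p⟩, hp, rfl⟩
    · exact Or.inr ⟨(redexPos_nil S).1 hp, rfl⟩
    · have hj : j < ar f := by
        obtain ⟨u, hu, -⟩ := hp
        by_contra hj
        simp [Term.subtermAt, hj] at hu
      exact Or.inl (Set.mem_iUnion.2 ⟨⟨j, hj⟩, p, (redexPos_cons S ⟨j, hj⟩ p).1 hp, rfl⟩)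
  · rintro (h | ⟨hred, rfl⟩)
    · obtain ⟨i, p, hp, rfl⟩ := Set.mem_iUnion.1 h
      exact ⟨i.val :: p, (redexPos_cons S i p).2 hp, rfl⟩
    · exact ⟨[], (redexPos_nil S).2 hred, rfl⟩

end RedexPositions

section Bullet

variable {F : Type} {ar : F → ℕ}

@[simp] lemma liftB_app (f : F) (ts : Fin (ar f) → Term F ar) :
    (liftB (Term.app f ts) : Term (Option F) (arB ar)) =
      Term.app (some f) fun i => liftB (ts i) := rfl

lemma liftB_subst (t : Term F ar) (σ : ℕ → Term F ar) :
    (liftB (t.subst σ) : Term (Option F) (arB ar)) = (liftB t).subst fun n => liftB (σ n) := by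
  induction t with
  | var n => rfl
  | app f ts ih => exact congrArg _ (funext ih)

lemma ground_liftB {t : Term F ar} (h : t.Ground) :
    (liftB t : Term (Option F) (arB ar)).Ground := by
  induction t with
  | var n => exact absurd h (Term.not_ground_var n)
  | app f ts ih => exact Term.ground_app_iff.2 fun i => ih i (Term.ground_app_iff.1 h i)

lemma count_liftB (t : Term F ar) (n : ℕ) :
    (liftB t : Term (Option F) (arB ar)).count n = t.count n := by
  induction t with
  | var m => rfl
  | app f ts ih => exact Finset.sum_congr rfl fun i _ => ih i

lemma ground_bulletTm : (bulletTm : Term (Option F) (arB ar)).Ground :=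
  Term.ground_app_iff.2 fun i => i.elim0

lemma mem_rules_liftB {R : TRS F ar} {lr : Term (Option F) (arB ar) × Term (Option F) (arB ar)} :
    lr ∈ R.liftB.rules ↔ ∃ l r, (l, r) ∈ R.rules ∧ lr = (liftB l, liftB r) := by
  constructor
  · rintro ⟨⟨l, r⟩, h, rfl⟩
    exact ⟨l, r, h, rfl⟩
  · rintro ⟨l, r, h, rfl⟩
    exact ⟨(l, r), h, rfl⟩

lemma TRS.LeftLinear.liftB {R : TRS F ar} (h : R.LeftLinear) : R.liftB.LeftLinear := by
  intro lr hlr n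
  obtain ⟨l, r, hmem, rfl⟩ := mem_rules_liftB.1 hlr
  exact (count_liftB l n).trans_le (h (l, r) hmem n)

lemma TRS.RightLinear.liftB {R : TRS F ar} (h : R.RightLinear) : R.liftB.RightLinear := by
  intro lr hlr n
  obtain ⟨l, r, hmem, rfl⟩ := mem_rules_liftB.1 hlr
  exact (count_liftB r n).trans_le (h (l, r) hmem n)

/-- A left inverse of `liftB`; the junk value for `•` is irrelevant on lifted terms. -/
def unliftB : Term (Option F) (arB ar) → Term F ar
  | .var n => .var n
  | .app none _ => .var 0
  | .app (some f) ts => .app f fun i => unliftB (ts i)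

lemma unliftB_liftB (t : Term F ar) : unliftB (liftB t) = t := by
  induction t with
  | var n => rfl
  | app f ts ih => exact congrArg _ (funext ih)

lemma unliftB_subst_liftB (t : Term F ar) (σ : ℕ → Term (Option F) (arB ar)) :
    unliftB ((liftB t).subst σ) = t.subst fun n => unliftB (σ n) := by
  induction t with
  | var n => rfl
  | app f ts ih => exact congrArg _ (funext ih)

lemma isRedex_liftB_iff {R : TRS F ar} {t : Term F ar} :
    R.liftB.IsRedex (liftB t) ↔ R.IsRedex t := by
  constructor
  · rintro ⟨_, hlr, σ, hσ⟩
    obtain ⟨l, r, hmem, rfl⟩ := mem_rules_liftB.1 hlr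
    exact ⟨(l, r), hmem, _, by rw [← unliftB_liftB t, hσ, unliftB_subst_liftB]⟩
  · rintro ⟨lr, hlr, σ, rfl⟩
    exact ⟨_, mem_rules_liftB.2 ⟨_, _, hlr, rfl⟩, _, liftB_subst _ _⟩

def NoBullet : Term (Option F) (arB ar) → Prop
  | .var _ => True
  | .app g us => g ≠ none ∧ ∀ i, NoBullet (us i)

lemma noBullet_liftB (t : Term F ar) : NoBullet (liftB t : Term (Option F) (arB ar)) := by
  induction t with
  | var n => trivial
  | app f ts ih => exact ⟨Option.some_ne_none f, ih⟩

lemma NoBullet.subtermAt {t w : Term (Option F) (arB ar)} {p : List ℕ} (ht : NoBullet t)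
    (hw : t.subtermAt p = some w) : NoBullet w := by
  induction p generalizing t with
  | nil => rw [Term.subtermAt_nil, Option.some.injEq] at hw; exact hw ▸ ht
  | cons i p ih =>
      cases t with
      | var n => cases hw
      | app g us =>
          by_cases hi : i < arB ar g
          · simp only [Term.subtermAt, dif_pos hi] at hw
            exact ih (ht.2 _) hw
          · simp [Term.subtermAt, hi] at hw

lemma head_ne_none_of_mem_SR {R : TRS F ar} {g : Option F}
    {us : Fin (arB ar g) → Term (Option F) (arB ar)} (h : Term.app g us ∈ SR R.liftB) :
    g ≠ none := by
  obtain ⟨_, hlr, f, ts, hl, i, p, hp⟩ := h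
  obtain ⟨l, r, -, rfl⟩ := mem_rules_liftB.1 hlr
  have hnb : NoBullet (Term.app f ts) := hl ▸ noBullet_liftB l
  exact (NoBullet.subtermAt (hnb.2 i) hp).1

lemma head_ne_none_of_mem_rules {R : TRS F ar} {g : Option F}
    {ls : Fin (arB ar g) → Term (Option F) (arB ar)} {r : Term (Option F) (arB ar)}
    (h : (Term.app g ls, r) ∈ R.liftB.rules) : g ≠ none := by
  obtain ⟨l, r, -, hlr⟩ := mem_rules_liftB.1 h
  have hl : Term.app g ls = liftB l := congrArg Prod.fst hlr
  exact (hl ▸ noBullet_liftB l : NoBullet (Term.app g ls)).1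

/-- `• → •` makes every term containing `•` reducible. -/
lemma noBullet_of_mem_NFset {R : TRS F ar} {t : Term (Option F) (arB ar)}
    (h : t ∈ TRS.NFset R.bullet) : NoBullet t := by
  obtain ⟨hg, hnf⟩ := h
  induction t with
  | var n => trivial
  | app g us ih =>
      refine ⟨?_, fun i => ih i (Term.ground_app_iff.1 hg i) fun ⟨p, hp⟩ =>
        hnf ⟨i.val :: p, (redexPos_cons _ i p).2 hp⟩⟩
      rintro rfl
      refine hnf ⟨[], (redexPos_nil _).2 ⟨(bulletTm, bulletTm), Or.inr rfl, Term.var, ?_⟩⟩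
      exact congrArg _ (funext fun i => i.elim0)

end Bullet

section DAutomaton

variable {F : Type} {ar : F → ℕ} {Q : Type}

/-- `s[•]_p →_Γ* q`. -/
def BulletReaches (Γ : Set (TARule (Option F) (arB ar) Q)) (s : Term F ar) (p : List ℕ)
    (q : Q) : Prop :=
  ∃ u, (liftB s).replaceAt p bulletTm = some u ∧ Reaches Γ u q

variable {Γ : Set (TARule (Option F) (arB ar) Q)}

lemma BulletReaches.reaches_bullet {s : Term F ar} {q : Q} (h : BulletReaches Γ s [] q) :
    Reaches Γ bulletTm q := by
  obtain ⟨u, hu, hq⟩ := h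
  rw [Term.replaceAt_nil, Option.some.injEq] at hu
  exact hu ▸ hq

lemma BulletReaches.exists_of_cons {f : F} {ts : Fin (ar f) → Term F ar} {i : Fin (ar f)}
    {p : List ℕ} {q : Q} (h : BulletReaches Γ (Term.app f ts) (i.val :: p) q) :
    ∃ qs : Fin (ar f) → Q, (∀ j ≠ i, Reaches Γ (liftB (ts j)) (qs j)) ∧
      BulletReaches Γ (ts i) p (qs i) ∧ (⟨some f, qs, q⟩ : TARule (Option F) (arB ar) Q) ∈ Γ := by
  obtain ⟨u, hu, hq⟩ := h
  have hcons := Term.replaceAt_cons (f := some f) (fun j => liftB (ts j)) i p bulletTm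
  obtain ⟨u', hu', rfl⟩ := Option.map_eq_some_iff.1 (hcons.symm.trans hu)
  obtain ⟨qs, hqs, hqi, hρ⟩ := hq.exists_of_app_update
  exact ⟨qs, hqs, ⟨u', hu', hqi⟩, hρ⟩

lemma mem_DTrans {Rb : TRS (Option F) (arB ar)} {enc enc2 : Term (Option F) (arB ar) → Q}
    {f : F} {S : Fin (ar f) → Set Q} {α : Type*} {W : Fin (ar f) → Set α}
    {c d : Fin (ar f) → α → Q} {P₂ : Set Q}
    (hcd : ∀ i, ∀ w ∈ W i, ∃ qs : Fin (ar f) → Q, qs i = c i w ∧ (∀ j ≠ i, qs j ∈ S j) ∧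
      (⟨some f, qs, d i w⟩ : TARule (Option F) (arB ar) Q) ∈ Γ)
    (hP₂ : (LhsMatch Rb enc2 (some f) S ∧ P₂ = {enc (Term.var 0)}) ∨
      (¬ LhsMatch Rb enc2 (some f) S ∧ P₂ = ∅)) :
    (⟨f, fun i => (S i, c i '' W i), (oneStep Γ (some f) S, (⋃ i, d i '' W i) ∪ P₂)⟩ :
      TARule F ar (Set Q × Set Q)) ∈ DTrans Rb Γ enc enc2 := by
  refine ⟨f, fun i => (S i, c i '' W i), ⋃ i, d i '' W i, P₂, ?_,
    fun i q ⟨w, hw, hq⟩ => ?_, hP₂, rfl⟩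
  · intro q hq
    obtain ⟨i, w, hw, rfl⟩ := Set.mem_iUnion.1 hq
    obtain ⟨qs, hqi, hqs, hρ⟩ := hcd i w hw
    refine Set.mem_iUnion.2 ⟨i, qs, fun j => ?_, hρ⟩
    dsimp only
    split_ifs with hj
    · subst hj
      exact ⟨w, hw, hqi.symm⟩
    · exact hqs j hj
  · subst hq
    obtain ⟨qs, hqi, hqs, hρ⟩ := hcd i w hw
    refine ⟨d i w, Set.mem_iUnion.2 ⟨i, w, hw, rfl⟩, qs, fun j => ?_, hρ⟩
    dsimp only
    split_ifs with hj
    · subst hj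
      exact hqi
    · exact hqs j hj

end DAutomaton

namespace CpSetup

variable {F : Type} [Fintype F] {ar : F → ℕ} {Q : Type} [Fintype Q] {R : TRS F ar}
  {T : Set (Term (Option F) (arB ar))} (C : CpSetup Q R.liftB T)

/-- Runs on normal forms of `ℛ•` and the saturation stay inside these transitions, while in
them `s[•]_ε` reaches only `⟨x⟩`: this is where `P² = {⟨x⟩}` comes from. -/
def ΓsatX : Set (TARule (Option F) (arB ar) Q) :=
  {ρ ∈ C.Γsat | ρ.1 = none → ρ.2.2 = C.enc (Term.var 0)}

lemma ΓsatX_subset_Γ' : C.ΓsatX ⊆ C.Γ' := fun _ h => C.Γsat_subset_Γ' h.1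

lemma eq_of_reaches_bullet {q : Q} (h : Reaches C.ΓsatX bulletTm q) :
    q = C.enc (Term.var 0) := by
  cases h with
  | app _ hρ => exact hρ.2 rfl

lemma reaches_ΓsatX_of_noBullet {t : Term (Option F) (arB ar)} {q : Q} (ht : NoBullet t)
    (h : Reaches C.Γsat t q) : Reaches C.ΓsatX t q := by
  induction h with
  | app _ hρ ih => exact Reaches.app (fun i => ih i (ht.2 i)) ⟨hρ, fun h => absurd h ht.1⟩

lemma BTrans_subset_ΓsatX : BTrans R.liftB C.enc ⊆ C.ΓsatX := by
  refine fun ρ hρ => ⟨C.BTrans_subset_Γsat hρ, ?_⟩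
  rcases hρ with ⟨g, us, hus, rfl⟩ | ⟨g, rfl⟩
  · exact fun h => absurd h (head_ne_none_of_mem_SR hus)
  · exact fun _ => rfl

lemma reaches_ΓsatX_of_rewrites (hlin : R.RightLinear) {u v : Term (Option F) (arB ar)}
    {q : Q} (hu : u.Ground) (h : Rewrites R.liftB.rules u v) (hv : Reaches C.ΓsatX v q) :
    Reaches C.ΓsatX u q := by
  refine reaches_of_rewrites (Qc := C.Qstates) (Γ0 := C.Γ0) (fun _ h => h.1)
    C.BTrans_subset_ΓsatX (fun ρ hρ hlhs => ⟨hρ, fun h => ?_⟩) C.Γ0_target_mem hlin.liftB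
    hu h hv
  obtain ⟨_, _, hr⟩ := hlhs
  exact absurd h (head_ne_none_of_mem_rules hr)

lemma reaches_ΓsatX_of_rewritesStar (hlin : R.RightLinear) {u t : Term (Option F) (arB ar)}
    {q : Q} (hu : u.Ground) (ht : t.Ground) (h : RewritesStar R.liftB.rules u t)
    (hq : Reaches C.ΓsatX t q) : Reaches C.ΓsatX u q := by
  have := reaches_of_rewritesStar (C.reaches_ΓsatX_of_rewrites hlin)
    (fun _ => ground_bulletTm) h (by rwa [Term.subst_of_ground ht])
  rwa [Term.subst_of_ground hu] at this

lemma lhsMatch_dn_liftB_iff (hlin : R.LeftLinear) {f : F} {ts : Fin (ar f) → Term F ar}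
    (hs : (Term.app f ts).Ground) :
    LhsMatch R.liftB C.enc2 (some f) (fun i => dn C.Γ' (liftB (ts i))) ↔
      R.IsRedex (Term.app f ts) :=
  (C.lhsMatch_dn_iff_isRedex (g := some f) (ts := fun i => liftB (ts i)) hlin.liftB
    (ground_liftB hs)).trans (isRedex_liftB_iff (t := Term.app f ts))

theorem reaches_DTrans (hlin : R.LeftLinear) {s : Term F ar} (hs : s.Ground)
    (qf : List ℕ → Q) (hqf : ∀ p, R.RedexPos s p → BulletReaches C.ΓsatX s p (qf p)) :
    Reaches (DTrans R.liftB C.Γ' C.enc C.enc2) s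
      (dn C.Γ' (liftB s), qf '' {p | R.RedexPos s p}) := by
  induction s generalizing qf with
  | var n => exact absurd hs (Term.not_ground_var n)
  | app f ts ih =>
      classical
      have hdec : ∀ (i : Fin (ar f)) p, ∃ qs : Fin (ar f) → Q, R.RedexPos (ts i) p →
          (∀ j ≠ i, Reaches C.ΓsatX (liftB (ts j)) (qs j)) ∧
          BulletReaches C.ΓsatX (ts i) p (qs i) ∧
          (⟨some f, qs, qf (i.val :: p)⟩ : TARule (Option F) (arB ar) Q) ∈ C.ΓsatX :=
        fun i p => if hp : R.RedexPos (ts i) p then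
            (hqf _ ((redexPos_cons R i p).2 hp)).exists_of_cons.imp fun _ h _ => h
          else ⟨fun _ => C.enc (Term.var 0), fun h => absurd h hp⟩
      choose qs hqs using hdec
      have hchild : ∀ i, Reaches (DTrans R.liftB C.Γ' C.enc C.enc2) (ts i)
          (dn C.Γ' (liftB (ts i)), (fun p => qs i p i) '' {p | R.RedexPos (ts i) p}) :=
        fun i => ih i (Term.ground_app_iff.1 hs i) _ fun p hp => (hqs i p hp).2.1
      rw [image_setOf_redexPos_app, liftB_app, dn_app]
      refine Reaches.app hchild (mem_DTrans (c := fun i p => qs i p i)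
        (d := fun i p => qf (i.val :: p)) (fun i p hp => ⟨qs i p, rfl,
          fun j hj => ((hqs i p hp).1 j hj).mono C.ΓsatX_subset_Γ',
          C.ΓsatX_subset_Γ' (hqs i p hp).2.2⟩) ?_)
      · have hmatch := C.lhsMatch_dn_liftB_iff hlin hs
        by_cases hred : R.IsRedex (Term.app f ts)
        · have hx := C.eq_of_reaches_bullet (hqf [] ((redexPos_nil R).2 hred)).reaches_bullet
          exact Or.inl ⟨hmatch.2 hred, by ext; simp [hred, hx]⟩
        · exact Or.inr ⟨mt hmatch.1 hred, by ext; simp [hred]⟩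

end CpSetup

theorem statement10_general {F : Type} [Fintype F] {ar : F → ℕ} {Q : Type} [Fintype Q]
    (R : TRS F ar) (hlin : R.IsLinear)
    (C : CpSetup Q R.liftB (TRS.NFset R.bullet))
    (s : Term F ar) (hs : s.Ground)
    (hall : ∀ p, R.RedexPos s p →
        ∃ u, (liftB s).replaceAt p bulletTm = some u ∧
          ∃ t ∈ TRS.NFset R.bullet, RewritesStar R.liftB.rules u t) :
    ∃ P ⊆ C.A.final,
      Reaches (DTrans R.liftB C.Γ' C.enc C.enc2) s (dn C.Γ' (liftB s), P) := by
  have : Nonempty Q := ⟨C.enc (Term.var 0)⟩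
  have hfinal : ∀ p, R.RedexPos s p → ∃ q ∈ C.A.final, BulletReaches C.ΓsatX s p q := by
    intro p hp
    obtain ⟨u, hu, t, ht, hut⟩ := hall p hp
    obtain ⟨htg, q, hq, hrun⟩ : t ∈ Lang C.A := C.hT ▸ ht
    have hrun' : Reaches C.ΓsatX t q :=
      C.reaches_ΓsatX_of_noBullet (noBullet_of_mem_NFset ht) (hrun.mono C.A_trans_subset_Γsat)
    exact ⟨q, hq, u, hu, C.reaches_ΓsatX_of_rewritesStar hlin.2
      (Term.ground_replaceAt (ground_liftB hs) ground_bulletTm hu) htg hut hrun'⟩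
  choose! qf hqf using hfinal
  exact ⟨qf '' {p | R.RedexPos s p}, Set.image_subset_iff.2 fun p hp => (hqf p hp).1,
    C.reaches_DTrans hlin.1 hs qf fun p hp => (hqf p hp).2⟩

/-- Let `ℛ` be a linear growing TRS over `𝓕` and `𝒟(ℛ)` the
powerset-pair automaton built from `𝒞'_{NF_{ℛ•}}(ℛ)`.  If `s[•]_p ∈ (→_ℛ*)[NF_{ℛ•}]`
for every redex position `p` of `s`, then there is a set `P ⊆ Q_f` such that
`s →_{Γ_𝒟}* [S,P]` with `S = s↓`. -/
theorem statement10 {F : Type} [Fintype F] {ar : F → ℕ} {Q : Type} [Fintype Q]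
    (R : TRS F ar) (hlin : R.IsLinear) (hgrow : R.Growing)
    (C : CpSetup Q R.liftB (TRS.NFset R.bullet))
    (s : Term F ar) (hs : s.Ground)
    (hall : ∀ p, R.RedexPos s p →
        ∃ u, (liftB s).replaceAt p bulletTm = some u ∧
          ∃ t ∈ TRS.NFset R.bullet, RewritesStar R.liftB.rules u t) :
    ∃ P ⊆ C.A.final,
      Reaches (DTrans R.liftB C.Γ' C.enc C.enc2) s (dn C.Γ' (liftB s), P) :=
  statement10_general R hlin C s hs hall
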